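/- Let L be the Laplacian of a strongly connected weighted digraph and R = diag(r) with rL = 0, r > 0, r·1_N = N. Then zero is a simple eigenvalue of L̂ = RL + LᵀR, and all other eigenvalues of L̂ are strictly positive; moreover there exists an orthogonal matrix U whose first column is (1/√N)·1_N such that Uᵀ L̂ U = diag(0, λ_2, ..., λ_N) with 0 < λ_2 ≤ ... ≤ λ_N. -/

import Mathlib

/-!
The balance condition `r L = 0` turns the quadratic form of `L̂` into
`∑ i j, r i * a i j * (x i - x j) ^ 2`. Hence `L̂` is positive semidefinite, and a kernel vector is
constant along every edge, so by strong connectivity the kernel is spanned by `1`: exactly one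
eigenvalue vanishes. Sorting an orthonormal eigenbasis by eigenvalue and fixing the sign of the
kernel vector `± (1 / √N) 1` gives `U`.
-/

open Matrix

section Laplacian

variable {ι : Type*} [Fintype ι] [DecidableEq ι]

def weightedLaplacian (a : ι → ι → ℝ) : Matrix ι ι ℝ :=
  of fun i j => (if i = j then ∑ k, a i k else 0) - a i j

def symmetrizedLaplacian (r : ι → ℝ) (a : ι → ι → ℝ) : Matrix ι ι ℝ :=
  diagonal r * weightedLaplacian a + (weightedLaplacian a)ᵀ * diagonal r

variable {r : ι → ℝ} {a : ι → ι → ℝ}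

lemma weightedLaplacian_mulVec_apply (a : ι → ι → ℝ) (x : ι → ℝ) (i : ι) :
    (weightedLaplacian a *ᵥ x) i = ∑ j, a i j * (x i - x j) := by
  simp [weightedLaplacian, mulVec, dotProduct, sub_mul, mul_sub, Finset.sum_mul]

lemma weightedLaplacian_mulVec_one (a : ι → ι → ℝ) : weightedLaplacian a *ᵥ 1 = 0 := by
  ext i
  simp [weightedLaplacian_mulVec_apply]

lemma sum_mul_eq_mul_sum_of_vecMul_weightedLaplacian_eq_zero
    (h : r ᵥ* weightedLaplacian a = 0) (j : ι) :
    ∑ i, r i * a i j = r j * ∑ k, a j k := by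
  have := congrFun h j
  simp only [vecMul, dotProduct, weightedLaplacian, of_apply, mul_sub, mul_ite, mul_zero,
    Finset.sum_sub_distrib, Finset.sum_ite_eq', Finset.mem_univ, ↓reduceIte, Pi.zero_apply] at this
  linarith

lemma dotProduct_diagonal_mul_add_transpose_mul_diagonal_mulVec (r x : ι → ℝ)
    (L : Matrix ι ι ℝ) :
    x ⬝ᵥ (diagonal r * L + Lᵀ * diagonal r) *ᵥ x = 2 * ∑ i, r i * x i * (L *ᵥ x) i := by
  rw [add_mulVec, dotProduct_add, ← mulVec_mulVec, ← mulVec_mulVec, mulVec_transpose,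
    dotProduct_comm x (_ ᵥ* L), ← dotProduct_mulVec]
  simp only [dotProduct, mulVec_diagonal, Finset.mul_sum, ← Finset.sum_add_distrib]
  exact Finset.sum_congr rfl fun i _ => by ring

lemma dotProduct_symmetrizedLaplacian_mulVec (h : r ᵥ* weightedLaplacian a = 0) (x : ι → ℝ) :
    x ⬝ᵥ symmetrizedLaplacian r a *ᵥ x = ∑ i, ∑ j, r i * a i j * (x i - x j) ^ 2 := by
  have hbalance : ∑ i, ∑ j, r i * a i j * x j ^ 2 = ∑ i, ∑ j, r i * a i j * x i ^ 2 := by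
    rw [Finset.sum_comm]
    refine Finset.sum_congr rfl fun j _ => ?_
    rw [← Finset.sum_mul, sum_mul_eq_mul_sum_of_vecMul_weightedLaplacian_eq_zero h,
      Finset.mul_sum, Finset.sum_mul]
  calc x ⬝ᵥ symmetrizedLaplacian r a *ᵥ x
      = ∑ i, ∑ j, r i * a i j * (2 * x i ^ 2 - 2 * x i * x j) := by
        rw [symmetrizedLaplacian, dotProduct_diagonal_mul_add_transpose_mul_diagonal_mulVec,
          Finset.mul_sum]
        simp_rw [weightedLaplacian_mulVec_apply, Finset.mul_sum]
        exact Finset.sum_congr rfl fun i _ => Finset.sum_congr rfl fun j _ => by ring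
    _ = ∑ i, ∑ j, r i * a i j * (x i - x j) ^ 2 + (∑ i, ∑ j, r i * a i j * x i ^ 2
          - ∑ i, ∑ j, r i * a i j * x j ^ 2) := by
        simp only [← Finset.sum_sub_distrib, ← Finset.sum_add_distrib]
        exact Finset.sum_congr rfl fun i _ => Finset.sum_congr rfl fun j _ => by ring
    _ = ∑ i, ∑ j, r i * a i j * (x i - x j) ^ 2 := by rw [hbalance, sub_self, add_zero]

lemma symmetrizedLaplacian_posSemidef (hr : ∀ i, 0 < r i) (ha : ∀ i j, 0 ≤ a i j)
    (h : r ᵥ* weightedLaplacian a = 0) : (symmetrizedLaplacian r a).PosSemidef := by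
  refine .of_dotProduct_mulVec_nonneg ?_ fun x => ?_
  · simp [IsHermitian, symmetrizedLaplacian, transpose_mul, add_comm]
  · rw [star_trivial, dotProduct_symmetrizedLaplacian_mulVec h]
    exact Finset.sum_nonneg fun i _ => Finset.sum_nonneg fun j _ =>
      mul_nonneg (mul_nonneg (hr i).le (ha i j)) (sq_nonneg _)

lemma symmetrizedLaplacian_mulVec_one (h : r ᵥ* weightedLaplacian a = 0) :
    symmetrizedLaplacian r a *ᵥ 1 = 0 := by
  have hr : diagonal r *ᵥ 1 = r := by
    ext i
    simp [mulVec_diagonal]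
  simp [symmetrizedLaplacian, add_mulVec, ← mulVec_mulVec, weightedLaplacian_mulVec_one,
    mulVec_transpose, hr, h]

lemma apply_eq_of_symmetrizedLaplacian_mulVec_eq_zero (hr : ∀ i, 0 < r i)
    (ha : ∀ i j, 0 ≤ a i j) (h : r ᵥ* weightedLaplacian a = 0) {x : ι → ℝ}
    (hx : symmetrizedLaplacian r a *ᵥ x = 0) {i j : ι} (hij : a i j ≠ 0) : x i = x j := by
  have hterm_nonneg : ∀ i j, 0 ≤ r i * a i j * (x i - x j) ^ 2 := fun i j =>
    mul_nonneg (mul_nonneg (hr i).le (ha i j)) (sq_nonneg _)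
  have hsum : ∑ i, ∑ j, r i * a i j * (x i - x j) ^ 2 = 0 := by
    rw [← dotProduct_symmetrizedLaplacian_mulVec h, hx, dotProduct_zero]
  rw [Fintype.sum_eq_zero_iff_of_nonneg fun i => Finset.sum_nonneg fun j _ => hterm_nonneg i j]
    at hsum
  have hterm := congrFun ((Fintype.sum_eq_zero_iff_of_nonneg (hterm_nonneg i)).mp
    (congrFun hsum i)) j
  simpa [(hr i).ne', hij, sub_eq_zero] using hterm

lemma apply_eq_of_symmetrizedLaplacian_mulVec_eq_zero_of_transGen (hr : ∀ i, 0 < r i)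
    (ha : ∀ i j, 0 ≤ a i j) (h : r ᵥ* weightedLaplacian a = 0) {x : ι → ℝ}
    (hx : symmetrizedLaplacian r a *ᵥ x = 0) {i j : ι}
    (hij : Relation.TransGen (fun u v => a v u ≠ 0) i j) : x i = x j := by
  have := hij.lift x fun u v huv =>
    (apply_eq_of_symmetrizedLaplacian_mulVec_eq_zero hr ha h hx huv).symm
  rwa [Relation.transGen_eq_self] at this

end Laplacian

section Spectral

variable {ι κ : Type*} [Fintype ι]

lemma Matrix.IsHermitian.transpose_eigenvectorUnitary_mul_self [DecidableEq ι]
    {A : Matrix ι ι ℝ} (hA : A.IsHermitian) :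
    (hA.eigenvectorUnitary : Matrix ι ι ℝ)ᵀ * hA.eigenvectorUnitary = 1 := by
  rw [← conjTranspose_eq_transpose_of_trivial, ← star_eq_conjTranspose]
  exact mem_unitaryGroup_iff'.mp hA.eigenvectorUnitary.2

lemma Matrix.IsHermitian.transpose_eigenvectorUnitary_mul_mul [DecidableEq ι]
    {A : Matrix ι ι ℝ} (hA : A.IsHermitian) :
    (hA.eigenvectorUnitary : Matrix ι ι ℝ)ᵀ * A * hA.eigenvectorUnitary
      = diagonal hA.eigenvalues := by
  rw [← conjTranspose_eq_transpose_of_trivial, ← star_eq_conjTranspose]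
  simpa [Unitary.conjStarAlgAut_apply] using hA.conjStarAlgAut_star_eigenvectorUnitary

lemma Matrix.card_mul_sq_eq_one_of_col_eq [DecidableEq κ] {V : Matrix ι κ ℝ} (hV : Vᵀ * V = 1)
    {k : κ} {c : ℝ} (hk : ∀ i, V i k = c) : (Fintype.card ι : ℝ) * c ^ 2 = 1 := by
  have := congrFun (congrFun hV k) k
  simpa [mul_apply, hk, sq] using this

lemma Matrix.eq_of_col_const [Nonempty ι] [DecidableEq κ] {V : Matrix ι κ ℝ} (hV : Vᵀ * V = 1)
    {k l : κ} (hk : ∀ i j, V i k = V j k) (hl : ∀ i j, V i l = V j l) : k = l := by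
  by_contra hkl
  obtain ⟨i₀⟩ := ‹Nonempty ι›
  have hk' := card_mul_sq_eq_one_of_col_eq hV (hk · i₀)
  have hl' := card_mul_sq_eq_one_of_col_eq hV (hl · i₀)
  have horth : (Fintype.card ι : ℝ) * (V i₀ k * V i₀ l) = 0 := by
    have := congrFun (congrFun hV k) l
    simpa [mul_apply, hk _ i₀, hl _ i₀, hkl] using this
  have : ((Fintype.card ι : ℝ) * (V i₀ k * V i₀ l)) ^ 2 = 1 := by
    linear_combination (Fintype.card ι * V i₀ l ^ 2) * hk' + hl'
  rw [horth] at this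
  norm_num at this

lemma Matrix.IsHermitian.existsUnique_eigenvalues_eq_zero [DecidableEq ι] [Nonempty ι]
    {A : Matrix ι ι ℝ} (hA : A.IsHermitian) (h1 : A *ᵥ 1 = 0)
    (hker : ∀ x, A *ᵥ x = 0 → ∀ i j, x i = x j) :
    ∃! k, hA.eigenvalues k = 0 := by
  have hcol : ∀ k, hA.eigenvalues k = 0 → ∀ i j,
      (hA.eigenvectorUnitary : Matrix ι ι ℝ) i k = (hA.eigenvectorUnitary : Matrix ι ι ℝ) j k :=
    fun k hk => hker (hA.eigenvectorBasis k) (by rw [mulVec_eigenvectorBasis, hk, zero_smul])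
  obtain ⟨k, -, hk⟩ : ∃ k ∈ Finset.univ, hA.eigenvalues k = 0 := by
    rw [← Finset.prod_eq_zero_iff]
    have hdet : A.det = 0 := exists_mulVec_eq_zero_iff.mp ⟨1, one_ne_zero, h1⟩
    simpa [hA.det_eq_prod_eigenvalues] using hdet
  exact ⟨k, hk, fun l hl => eq_of_col_const hA.transpose_eigenvectorUnitary_mul_self
    (hcol l hl) (hcol k hk)⟩

lemma Matrix.transpose_mul_mul_submatrix_mul_diagonal {m n : Type*} [Fintype m] [DecidableEq m]
    [Fintype n] [DecidableEq n] {V A : Matrix n n ℝ} {μ : n → ℝ} (hVAV : Vᵀ * A * V = diagonal μ)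
    (σ : m ≃ n) {w : m → ℝ} (hw : w * w = 1) :
    (V.submatrix id σ * diagonal w)ᵀ * A * (V.submatrix id σ * diagonal w) = diagonal (μ ∘ σ) := by
  have hconj : Vᵀ.submatrix σ id * A * V.submatrix id σ = diagonal (μ ∘ σ) := by
    rw [← submatrix_diagonal_equiv, ← hVAV, submatrix_mul _ _ _ id _ Function.bijective_id,
      submatrix_mul _ _ _ id _ Function.bijective_id, submatrix_id_id]
  calc (V.submatrix id σ * diagonal w)ᵀ * A * (V.submatrix id σ * diagonal w)
      = diagonal w * (Vᵀ.submatrix σ id * A * V.submatrix id σ) * diagonal w := by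
        simp only [transpose_mul, diagonal_transpose, transpose_submatrix, Matrix.mul_assoc]
    _ = diagonal (μ ∘ σ) := by
        rw [hconj, diagonal_mul_diagonal, diagonal_mul_diagonal]
        congr 1
        funext i
        have hwi : w i * w i = 1 := congrFun hw i
        simp only [Function.comp_apply]
        linear_combination μ (σ i) * hwi

lemma Tuple.sort_apply_eq_zero_and_pos {N : ℕ} (hN : 0 < N) {μ : Fin N → ℝ} (hμ : 0 ≤ μ)
    (hz : ∃! k, μ k = 0) :
    μ (Tuple.sort μ ⟨0, hN⟩) = 0 ∧ ∀ i, i ≠ ⟨0, hN⟩ → 0 < μ (Tuple.sort μ i) := by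
  obtain ⟨k, hk, hkuniq⟩ := hz
  have h0 : μ (Tuple.sort μ ⟨0, hN⟩) = 0 := by
    refine le_antisymm ?_ (hμ _)
    calc μ (Tuple.sort μ ⟨0, hN⟩) ≤ μ (Tuple.sort μ ((Tuple.sort μ).symm k)) :=
          Tuple.monotone_sort μ (Nat.zero_le _)
      _ = 0 := by rw [Equiv.apply_symm_apply, hk]
  refine ⟨h0, fun i hi => (hμ _).lt_of_ne fun hzero => hi ?_⟩
  exact (Tuple.sort μ).injective ((hkuniq _ hzero.symm).trans (hkuniq _ h0).symm)

theorem Matrix.PosSemidef.exists_orthogonal_conj_eq_diagonal_sorted {N : ℕ} (hN : 0 < N)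
    {A : Matrix (Fin N) (Fin N) ℝ} (hA : A.PosSemidef) (h1 : A *ᵥ 1 = 0)
    (hker : ∀ x, A *ᵥ x = 0 → ∀ i j, x i = x j) :
    ∃ (U : Matrix (Fin N) (Fin N) ℝ) (d : Fin N → ℝ),
      Uᵀ * U = 1 ∧ U * Uᵀ = 1 ∧
      (∀ i, U i ⟨0, hN⟩ = 1 / Real.sqrt N) ∧
      Uᵀ * A * U = diagonal d ∧
      d ⟨0, hN⟩ = 0 ∧ Monotone d ∧
      (∀ i : Fin N, i ≠ ⟨0, hN⟩ → 0 < d i) := by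
  have hN' : (0 : ℝ) < N := by exact_mod_cast hN
  set i₀ : Fin N := ⟨0, hN⟩
  have : Nonempty (Fin N) := ⟨i₀⟩
  set V : Matrix (Fin N) (Fin N) ℝ := ↑hA.1.eigenvectorUnitary
  set μ := hA.1.eigenvalues
  set σ := Tuple.sort μ
  obtain ⟨hμ0, hμpos⟩ := Tuple.sort_apply_eq_zero_and_pos hN hA.eigenvalues_nonneg
    (hA.1.existsUnique_eigenvalues_eq_zero h1 hker)
  set c := V i₀ (σ i₀)
  have hcol : ∀ i, V i (σ i₀) = c := fun i =>
    hker (hA.1.eigenvectorBasis (σ i₀))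
      (by rw [hA.1.mulVec_eigenvectorBasis, hμ0, zero_smul]) i i₀
  have hc : (N : ℝ) * c ^ 2 = 1 := by
    simpa using card_mul_sq_eq_one_of_col_eq hA.1.transpose_eigenvectorUnitary_mul_self hcol
  -- `√N c = ± 1`; rescaling the kernel column by it makes that column positive
  set w : Fin N → ℝ := Function.update 1 i₀ (Real.sqrt N * c)
  have hw : w * w = 1 := by
    funext i
    rcases eq_or_ne i i₀ with rfl | hi
    · simp only [w, Pi.mul_apply, Function.update_self, Pi.one_apply]
      linear_combination c ^ 2 * Real.sq_sqrt hN'.le + hc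
    · simp [w, hi]
  have hUU : (V.submatrix id σ * diagonal w)ᵀ * (V.submatrix id σ * diagonal w) = 1 := by
    simpa using transpose_mul_mul_submatrix_mul_diagonal (A := 1) (μ := 1)
      (by simpa using hA.1.transpose_eigenvectorUnitary_mul_self) σ hw
  refine ⟨V.submatrix id σ * diagonal w, μ ∘ σ, hUU, mul_eq_one_comm.mp hUU, fun i => ?_,
    transpose_mul_mul_submatrix_mul_diagonal hA.1.transpose_eigenvectorUnitary_mul_mul σ hw,
    hμ0, Tuple.monotone_sort μ, hμpos⟩
  simp only [mul_diagonal, submatrix_apply, id, hcol, w, Function.update_self]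
  rw [eq_div_iff (Real.sqrt_ne_zero'.mpr hN')]
  linear_combination c ^ 2 * Real.sq_sqrt hN'.le + hc

end Spectral

theorem stmt_2_general (N : ℕ) (hN : 0 < N) (a : Fin N → Fin N → ℝ)
    (hnn : ∀ i j, 0 ≤ a i j)
    (hconn : ∀ i j : Fin N, i ≠ j →
      Relation.TransGen (fun u v : Fin N => a v u ≠ 0) i j)
    (L : Matrix (Fin N) (Fin N) ℝ)
    (hL : L = Matrix.of fun i j => (if i = j then ∑ k, a i k else 0) - a i j)
    (r : Fin N → ℝ) (hrpos : ∀ i, 0 < r i)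
    (hrL : Matrix.vecMul r L = 0)
    (R : Matrix (Fin N) (Fin N) ℝ) (hR : R = Matrix.diagonal r) :
    ∃ (U : Matrix (Fin N) (Fin N) ℝ) (d : Fin N → ℝ),
      Uᵀ * U = 1 ∧ U * Uᵀ = 1 ∧
      (∀ i, U i ⟨0, hN⟩ = 1 / Real.sqrt N) ∧
      Uᵀ * (R * L + Lᵀ * R) * U = Matrix.diagonal d ∧
      d ⟨0, hN⟩ = 0 ∧ Monotone d ∧
      (∀ i : Fin N, i ≠ ⟨0, hN⟩ → 0 < d i) := by
  subst hL hR
  refine (symmetrizedLaplacian_posSemidef hrpos hnn hrL).exists_orthogonal_conj_eq_diagonal_sorted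
    hN (symmetrizedLaplacian_mulVec_one hrL) fun x hx i j => ?_
  rcases eq_or_ne i j with rfl | hij
  · rfl
  · exact apply_eq_of_symmetrizedLaplacian_mulVec_eq_zero_of_transGen hrpos hnn hrL hx
      (hconn i j hij)

/-- Zero is a simple eigenvalue of `L̂ = R L + Lᵀ R`, all other eigenvalues are
positive, and `L̂` is orthogonally diagonalized by a matrix `U` whose first column
is `(1/√N) 1`. -/
theorem stmt_2 (N : ℕ) (hN : 0 < N) (a : Fin N → Fin N → ℝ)
    (hnn : ∀ i j, 0 ≤ a i j) (hdiag : ∀ i, a i i = 0)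
    (hconn : ∀ i j : Fin N, i ≠ j →
      Relation.TransGen (fun u v : Fin N => a v u ≠ 0) i j)
    (L : Matrix (Fin N) (Fin N) ℝ)
    (hL : L = Matrix.of fun i j => (if i = j then ∑ k, a i k else 0) - a i j)
    (r : Fin N → ℝ) (hrpos : ∀ i, 0 < r i)
    (hrL : Matrix.vecMul r L = 0) (hrsum : ∑ i, r i = N)
    (R : Matrix (Fin N) (Fin N) ℝ) (hR : R = Matrix.diagonal r) :
    ∃ (U : Matrix (Fin N) (Fin N) ℝ) (d : Fin N → ℝ),
      Uᵀ * U = 1 ∧ U * Uᵀ = 1 ∧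
      (∀ i, U i ⟨0, hN⟩ = 1 / Real.sqrt N) ∧
      Uᵀ * (R * L + Lᵀ * R) * U = Matrix.diagonal d ∧
      d ⟨0, hN⟩ = 0 ∧ Monotone d ∧
      (∀ i : Fin N, i ≠ ⟨0, hN⟩ → 0 < d i) :=
  stmt_2_general N hN a hnn hconn L hL r hrpos hrL R hR
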